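/- arXiv:2409.00827 — 2 statements merged into one kernel-verified Lean document; each statement's English description precedes it below -/
import Mathlib

section
/- Let G be a finite W_p graph (p a positive integer) with independence number α(G) > 1. Then for every vertex x of G, the localization G_x = G − N_G[x] is also a W_p graph. -/
/-!
If `A` is independent, then so is `A ∪ X` for every independent set `X` of the localization
`G_A = G − N[A]`; hence `α(G_A) ≤ α(G) - |A|`, while the trace `S ∩ V(G_A) = S \ A` of a maximum
independent set `S ⊇ A` has exactly `α(G) - |A|` vertices. Given disjoint independent sets `B_i`
of `G_A`, choose, among the families of disjoint maximum independent sets `S_i ⊇ B_i` of `G`, one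
maximizing `∑ |S_i ∩ V(G_A)|`. If some trace `S_j ∩ V(G_A)` had fewer than `α(G) - |A|` vertices,
applying the `W_p` property to the traces, with `A` added to the `j`-th one, would increase the
sum. So the traces are disjoint maximum independent sets of `G_A` containing the `B_i`.
-/

namespace WpGraphs

variable {V : Type*}

/-- `S` is an independent set of `G`: its vertices are pairwise non-adjacent. -/
def IsIndepSet (G : SimpleGraph V) (S : Set V) : Prop :=
  S.Pairwise fun u v => ¬ G.Adj u v

/-- The independence number `α(G)`: the cardinality of a largest independent set. -/
noncomputable def indepNum (G : SimpleGraph V) : ℕ :=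
  sSup {n : ℕ | ∃ S : Set V, IsIndepSet G S ∧ S.ncard = n}

/-- A maximum independent set: an independent set of cardinality `α(G)`. -/
def IsMaxIndepSet (G : SimpleGraph V) (S : Set V) : Prop :=
  IsIndepSet G S ∧ S.ncard = indepNum G

/-- A maximal independent set: an independent set that cannot be extended. -/
def IsMaximalIndepSet (G : SimpleGraph V) (S : Set V) : Prop :=
  IsIndepSet G S ∧ ∀ T : Set V, IsIndepSet G T → S ⊆ T → S = T

/-- `G` is a `W_p` graph: `n(G) ≥ p` and every `p` pairwise disjoint independent sets
are contained in `p` pairwise disjoint maximum independent sets. -/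
def IsWp (G : SimpleGraph V) (p : ℕ) : Prop :=
  p ≤ Nat.card V ∧
    ∀ A : Fin p → Set V, (∀ i, IsIndepSet G (A i)) →
      (Pairwise fun i j => Disjoint (A i) (A j)) →
      ∃ S : Fin p → Set V, (∀ i, IsMaxIndepSet G (S i)) ∧
        (Pairwise fun i j => Disjoint (S i) (S j)) ∧ ∀ i, A i ⊆ S i

/-- The neighborhood `N_G(S)` of a set of vertices `S`. -/
def setNbhd (G : SimpleGraph V) (S : Set V) : Set V :=
  {v | v ∉ S ∧ ∃ u ∈ S, G.Adj u v}

/-- `G` is `λ`-quasi-regularizable: `λ·|S| ≤ |N_G(S)|` for every independent set `S`. -/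
def QuasiReg (G : SimpleGraph V) (lam : ℝ) : Prop :=
  ∀ S : Set V, IsIndepSet G S → lam * S.ncard ≤ ((setNbhd G S).ncard : ℝ)

/-- `s_k(G)`: the number of independent sets of cardinality `k` in `G`
(the `k`-th coefficient of the independence polynomial). -/
noncomputable def indepCount (G : SimpleGraph V) (k : ℕ) : ℕ :=
  {S : Set V | IsIndepSet G S ∧ S.ncard = k}.ncard

/-- The independence polynomial of `G` is log-concave:
`s_k² ≥ s_{k-1}·s_{k+1}` for all `1 ≤ k ≤ α(G) - 1`. -/
def IndepLogConcave (G : SimpleGraph V) : Prop :=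
  ∀ k : ℕ, 1 ≤ k → k + 1 ≤ indepNum G →
    indepCount G (k - 1) * indepCount G (k + 1) ≤ indepCount G k ^ 2

/-- The vertex set of the localization `G_A = G − N_G[A]`:
all vertices outside `A` having no neighbor in `A`. -/
def locSet (G : SimpleGraph V) (A : Set V) : Set V :=
  {v | v ∉ A ∧ ∀ u ∈ A, ¬ G.Adj u v}

/-- `G` is well-covered: all maximal independent sets have the same size. -/
def IsWellCovered (G : SimpleGraph V) : Prop :=
  ∀ S T : Set V, IsMaximalIndepSet G S → IsMaximalIndepSet G T → S.ncard = T.ncard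

/-- `G` is very well-covered: well-covered, no isolated vertices, and `n(G) = 2·α(G)`. -/
def IsVeryWellCovered (G : SimpleGraph V) : Prop :=
  IsWellCovered G ∧ (∀ v : V, ∃ w : V, G.Adj v w) ∧ Nat.card V = 2 * indepNum G

/-- The clique corona `G∘𝓗` where `𝓗 = {K_{p v} : v ∈ V(G)}`: each vertex `v` of `G`
is joined to all vertices of its own copy of the complete graph `K_{p v}`. -/
def cliqueCorona (G : SimpleGraph V) (p : V → ℕ) :
    SimpleGraph (V ⊕ Σ v : V, Fin (p v)) :=
  SimpleGraph.fromRel fun a b =>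
    match a, b with
    | .inl u, .inl v => G.Adj u v
    | .inl u, .inr ⟨v, _⟩ => u = v
    | .inr ⟨u, _⟩, .inr ⟨v, _⟩ => u = v
    | .inr _, .inl _ => False

variable {G : SimpleGraph V}

open Set Function

lemma indepNum_le_of_forall {n : ℕ} (h : ∀ S, IsIndepSet G S → S.ncard ≤ n) : indepNum G ≤ n :=
  csSup_le' <| by rintro _ ⟨S, hS, rfl⟩; exact h S hS

lemma IsIndepSet.ncard_le_indepNum [Finite V] {S : Set V} (hS : IsIndepSet G S) :
    S.ncard ≤ indepNum G :=
  le_csSup ⟨Nat.card V, by rintro _ ⟨T, -, rfl⟩; exact ncard_le_card T⟩ ⟨S, hS, rfl⟩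

lemma IsIndepSet.isMaxIndepSet_of_indepNum_le [Finite V] {S : Set V} (hS : IsIndepSet G S)
    (h : indepNum G ≤ S.ncard) : IsMaxIndepSet G S :=
  ⟨hS, le_antisymm hS.ncard_le_indepNum h⟩

lemma isIndepSet_induce_iff {s : Set V} {T : Set s} :
    IsIndepSet (G.induce s) T ↔ IsIndepSet G (Subtype.val '' T) :=
  (Subtype.val_injective.injOn.pairwise_image (r := fun u v => ¬ G.Adj u v)).symm

lemma IsIndepSet.preimage_val {s X : Set V} (hX : IsIndepSet G X) :
    IsIndepSet (G.induce s) (Subtype.val ⁻¹' X) :=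
  fun _ ha _ hb hne => hX ha hb (Subtype.val_injective.ne hne)

lemma ncard_preimage_val (s X : Set V) : (Subtype.val ⁻¹' X : Set s).ncard = (X ∩ s).ncard := by
  rw [← ncard_image_of_injective _ Subtype.val_injective, image_preimage_eq_inter_range,
    Subtype.range_coe]

lemma natCard_le_of_pairwise_disjoint {ι α : Type*} [Finite α] {s : ι → Set α}
    (hd : Pairwise (Disjoint on s)) (hne : ∀ i, (s i).Nonempty) : Nat.card ι ≤ Nat.card α := by
  choose f hf using hne
  exact Nat.card_le_card_of_injective f fun i j hij =>
    hd.eq (not_disjoint_iff.2 ⟨f i, hf i, hij ▸ hf j⟩)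

lemma disjoint_locSet (G : SimpleGraph V) (A : Set V) : Disjoint A (locSet G A) :=
  disjoint_left.2 fun _ ha hv => hv.1 ha

lemma IsIndepSet.union_of_subset_locSet {A X : Set V} (hA : IsIndepSet G A)
    (hX : IsIndepSet G X) (hXA : X ⊆ locSet G A) : IsIndepSet G (A ∪ X) :=
  pairwise_union.2 ⟨hA, hX, fun a ha _ hb _ =>
    ⟨(hXA hb).2 a ha, fun h => (hXA hb).2 a ha h.symm⟩⟩

lemma IsIndepSet.ncard_add_ncard_le_indepNum [Finite V] {A X : Set V} (hA : IsIndepSet G A)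
    (hX : IsIndepSet G X) (hXA : X ⊆ locSet G A) : A.ncard + X.ncard ≤ indepNum G := by
  rw [← ncard_union_eq ((disjoint_locSet G A).mono_right hXA)]
  exact (hA.union_of_subset_locSet hX hXA).ncard_le_indepNum

lemma IsIndepSet.indepNum_induce_locSet_le [Finite V] {A : Set V} (hA : IsIndepSet G A) :
    indepNum (G.induce (locSet G A)) ≤ indepNum G - A.ncard :=
  indepNum_le_of_forall fun T hT => by
    have := hA.ncard_add_ncard_le_indepNum (isIndepSet_induce_iff.1 hT)
      (Subtype.coe_image_subset _ T)
    rw [ncard_image_of_injective T Subtype.val_injective] at this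
    omega

lemma IsMaxIndepSet.ncard_inter_locSet [Finite V] {S A : Set V} (hS : IsMaxIndepSet G S)
    (hAS : A ⊆ S) : (S ∩ locSet G A).ncard = indepNum G - A.ncard := by
  have : S ∩ locSet G A = S \ A := by
    ext v
    exact ⟨fun h => ⟨h.1, h.2.1⟩, fun h =>
      ⟨h.1, h.2, fun u hu => hS.1 (hAS hu) h.1 (ne_of_mem_of_not_mem hu h.2)⟩⟩
  rw [this, ncard_sdiff hAS, hS.2]

def IsMaxIndepPacking {ι : Type*} (G : SimpleGraph V) (S : ι → Set V) : Prop :=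
  (∀ i, IsMaxIndepSet G (S i)) ∧ Pairwise (Disjoint on S)

lemma IsWp.exists_packing_superset_inter_locSet {p : ℕ} {A : Set V} (hWp : IsWp G p)
    (hA : IsIndepSet G A) {S : Fin p → Set V} (hS : IsMaxIndepPacking G S) (j : Fin p) :
    ∃ T : Fin p → Set V, IsMaxIndepPacking G T ∧ (∀ i, S i ∩ locSet G A ⊆ T i) ∧ A ⊆ T j := by
  set W := locSet G A
  let B : Fin p → Set V := fun i => (if i = j then A else ∅) ∪ S i ∩ W
  have hB_sub : ∀ i, B i ⊆ A ∪ S i ∩ W := fun i =>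
    union_subset_union_left _ (by split_ifs <;> simp)
  have hA_disj : ∀ i k, Disjoint (if i = j then A else ∅) (S k ∩ W) := fun i k => by
    split_ifs
    exacts [(disjoint_locSet G A).mono_right inter_subset_right, empty_disjoint _]
  have hB_indep : ∀ i, IsIndepSet G (B i) := fun i =>
    (hA.union_of_subset_locSet ((hS.1 i).1.mono inter_subset_left) inter_subset_right).mono
      (hB_sub i)
  have hB_disj : Pairwise (Disjoint on B) := fun i k hik => by
    refine disjoint_union_left.2 ⟨disjoint_union_right.2 ⟨?_, hA_disj i k⟩,
      disjoint_union_right.2 ⟨(hA_disj k i).symm, ?_⟩⟩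
    · split_ifs with hi hk
      exacts [absurd (hi.trans hk.symm) hik, disjoint_bot_right, disjoint_bot_left,
        disjoint_bot_left]
    · exact (hS.2 hik).mono inter_subset_left inter_subset_left
  obtain ⟨T, hTmax, hTdisj, hBT⟩ := hWp.2 B hB_indep hB_disj
  refine ⟨T, ⟨hTmax, hTdisj⟩, fun i => subset_union_right.trans (hBT i), ?_⟩
  simpa [B] using subset_union_left.trans (hBT j)

lemma IsWp.exists_packing_ncard_inter_locSet [Finite V] {p : ℕ} {A : Set V} (hWp : IsWp G p)
    (hA : IsIndepSet G A) {B : Fin p → Set V} (hB : ∀ i, IsIndepSet G (B i))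
    (hBd : Pairwise (Disjoint on B)) (hBA : ∀ i, B i ⊆ locSet G A) :
    ∃ S : Fin p → Set V, IsMaxIndepPacking G S ∧ (∀ i, B i ⊆ S i) ∧
      ∀ i, (S i ∩ locSet G A).ncard = indepNum G - A.ncard := by
  set W := locSet G A
  let 𝒮 : Set (Fin p → Set V) := {S | IsMaxIndepPacking G S ∧ ∀ i, B i ⊆ S i}
  have hne : 𝒮.Nonempty := by
    obtain ⟨S, hmax, hdisj, hsub⟩ := hWp.2 B hB hBd
    exact ⟨S, ⟨hmax, hdisj⟩, hsub⟩
  obtain ⟨S, ⟨hS, hBS⟩, hSmax⟩ :=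
    exists_max_image 𝒮 (fun S => ∑ i, (S i ∩ W).ncard) 𝒮.toFinite hne
  refine ⟨S, hS, hBS, fun j => ?_⟩
  by_contra hj
  have hlt : (S j ∩ W).ncard < indepNum G - A.ncard := by
    have : A.ncard + (S j ∩ W).ncard ≤ indepNum G :=
      hA.ncard_add_ncard_le_indepNum ((hS.1 j).1.mono inter_subset_left) inter_subset_right
    omega
  obtain ⟨T, hT, hST, hAT⟩ := hWp.exists_packing_superset_inter_locSet hA hS j
  have hmono : ∀ i, (S i ∩ W).ncard ≤ (T i ∩ W).ncard := fun i =>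
    ncard_le_ncard (subset_inter (hST i) inter_subset_right)
  have hTj : (T j ∩ W).ncard = indepNum G - A.ncard := (hT.1 j).ncard_inter_locSet hAT
  refine (hSmax T ⟨hT, fun i => (subset_inter (hBS i) (hBA i)).trans (hST i)⟩).not_gt ?_
  exact Finset.sum_lt_sum (fun i _ => hmono i) ⟨j, Finset.mem_univ j, hTj ▸ hlt⟩

theorem IsWp.induce_locSet [Finite V] {p : ℕ} {A : Set V} (hWp : IsWp G p)
    (hA : IsIndepSet G A) (hα : A.ncard < indepNum G) : IsWp (G.induce (locSet G A)) p := by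
  set W := locSet G A
  have hmax : ∀ S, IsMaxIndepSet G S → (S ∩ W).ncard = indepNum G - A.ncard →
      IsMaxIndepSet (G.induce W) (Subtype.val ⁻¹' S) := fun S hS hcard =>
    hS.1.preimage_val.isMaxIndepSet_of_indepNum_le
      (by rw [ncard_preimage_val, hcard]; exact hA.indepNum_induce_locSet_le)
  refine ⟨?_, fun B hB hBd => ?_⟩
  · obtain ⟨S, hS, -, hcard⟩ := hWp.exists_packing_ncard_inter_locSet hA (B := fun _ => ∅)
      (fun _ => pairwise_empty _) (fun _ _ _ => disjoint_bot_left) (fun _ => empty_subset _)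
    simpa using natCard_le_of_pairwise_disjoint (s := fun i => (Subtype.val ⁻¹' S i : Set W))
      (fun i j hij => (hS.2 hij).preimage _)
      fun i => nonempty_of_ncard_ne_zero (by rw [ncard_preimage_val, hcard i]; omega)
  · obtain ⟨S, hS, hBS, hcard⟩ := hWp.exists_packing_ncard_inter_locSet hA
      (B := fun i => Subtype.val '' B i) (fun i => isIndepSet_induce_iff.1 (hB i))
      (fun i j hij => (disjoint_image_iff Subtype.val_injective).2 (hBd hij))
      (fun i => Subtype.coe_image_subset _ _)
    exact ⟨fun i => Subtype.val ⁻¹' S i, fun i => hmax _ (hS.1 i) (hcard i),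
      fun i j hij => (hS.2 hij).preimage _,
      fun i => (subset_preimage_image _ _).trans (preimage_mono (hBS i))⟩

theorem wp_localization_vertex_general {V : Type*} [Finite V] (G : SimpleGraph V) (p : ℕ)
    (hWp : IsWp G p) (hα : 1 < indepNum G) (x : V) :
    IsWp (G.induce (locSet G {x})) p :=
  hWp.induce_locSet (pairwise_singleton x _) (by rwa [ncard_singleton])

/-- If `G` is a finite `W_p` graph with `α(G) > 1`, then for every
vertex `x`, the localization `G_x = G − N_G[x]` is also a `W_p` graph. -/
theorem wp_localization_vertex {V : Type*} [Finite V] (G : SimpleGraph V) (p : ℕ)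
    (hp : 0 < p) (hWp : IsWp G p) (hα : 1 < indepNum G) (x : V) :
    IsWp (G.induce (locSet G {x})) p :=
  wp_localization_vertex_general G p hWp hα x

end WpGraphs
end

section
/- Let G be a finite graph, let p(v) ≥ 1 be a positive integer for each vertex v of G, let 𝓗 = {K_{p(v)} : v ∈ V(G)}, and set p = min over v ∈ V(G) of p(v). If p ≥ n(G)²/(4(n(G)+1)), then the independence polynomial I(G∘𝓗; x) of the clique corona graph G∘𝓗 is log-concave. -/
namespace WpGraphs

variable {V : Type*}

/-!
An independent set of the clique corona `G ∘ 𝓗` is an independent set `A` of `G` together with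
one vertex of the clique `K_{p v}` for each `v` in some `B` disjoint from `A`; so `s_j` counts
pairs `(A, B)` with `|A| + |B| = j` with weight `∏_{v ∈ B} p v`. Allowing `A` only inside a set
`R`, we prove the stronger mixed inequality `s_{j+2}(R₁) s_j(R₂) ≤ s_{j+1}(R₁) s_{j+1}(R₂)` by
induction on `∑ p`. If every weight equals `q`, double counting (independent set, vertex) pairs
gives `q (n - j) s_j ≤ (j + 1) s_{j+1} ≤ (q + 1) (n - j) s_j`, and `n² ≤ 4 q (n + 1)` is what
lets the upper bound at `j + 1` for `R₁` and the lower bound at `j` for `R₂` combine. Otherwise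
lower a weight `p u > q` by one: then `s_{j+1} = s'_{j+1} + s'_j(G - u)`, and after expanding every
term at `u` the mixed inequality for `p` follows from those for the lowered weights on `G` and on
`G - u`, applied to the sets `R - u` and `R - u - N(u)`.
-/

open Finset

theorem succ_mul_mul_le_of_sq_le {q a b : ℕ} (h : (a + b) ^ 2 ≤ 4 * q * (a + b + 1)) :
    (q + 1) * (a * b) ≤ q * ((a + 1) * (b + 1)) := by
  zify at h ⊢
  nlinarith [sq_nonneg ((a : ℤ) - b)]

theorem sq_le_of_succ_sq_le {q c : ℕ} (h : (c + 1) ^ 2 ≤ 4 * q * (c + 1 + 1)) :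
    c ^ 2 ≤ 4 * q * (c + 1) := by
  refine Nat.le_of_mul_le_mul_right (c := c + 2) ?_ (by omega)
  calc c ^ 2 * (c + 2) ≤ (c + 1) ^ 2 * (c + 1) := by nlinarith
    _ ≤ 4 * q * (c + 1 + 1) * (c + 1) := Nat.mul_le_mul_right _ h
    _ = 4 * q * (c + 1) * (c + 2) := by ring

open scoped Classical in
theorem card_filter_injOn_fst_image_eq {ι : Type*} {α : ι → Type*} [DecidableEq ι]
    [∀ i, Fintype (α i)] (B : Finset ι) :
    #((B.sigma fun i => (univ : Finset (α i))).powerset.filter fun T : Finset (Σ i, α i) =>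
        Set.InjOn Sigma.fst (T : Set (Σ i, α i)) ∧ T.image Sigma.fst = B) =
      ∏ i ∈ B, Fintype.card (α i) := by
  simp only [← card_univ, ← card_pi]
  symm
  refine card_bij (fun g _ => B.attach.image fun i => ⟨i.1, g i.1 i.2⟩) ?_ ?_ ?_
  · intro g _
    refine mem_filter.2 ⟨mem_powerset.2 fun x hx => ?_, ?_, ?_⟩
    · obtain ⟨i, -, rfl⟩ := mem_image.1 hx
      simp
    · rintro _ hx _ hy hxy
      obtain ⟨i, -, rfl⟩ := mem_image.1 (mem_coe.1 hx)
      obtain ⟨j, -, rfl⟩ := mem_image.1 (mem_coe.1 hy)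
      obtain rfl : i = j := Subtype.ext hxy
      rfl
    · ext i
      simp
  · intro g₁ _ g₂ _ h
    funext i hi
    have hmem : (⟨i, g₁ i hi⟩ : Σ i, α i) ∈ B.attach.image fun i => ⟨i.1, g₂ i.1 i.2⟩ := by
      rw [← h]
      exact mem_image.2 ⟨⟨i, hi⟩, mem_attach _ _, rfl⟩
    obtain ⟨⟨j, hj⟩, -, hji⟩ := mem_image.1 hmem
    obtain ⟨rfl, hg⟩ := Sigma.mk.inj_iff.1 hji
    exact (eq_of_heq hg).symm
  · intro T hT
    obtain ⟨-, hinj, himage⟩ := mem_filter.1 hT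
    have hex : ∀ i ∈ B, ∃ a, (⟨i, a⟩ : Σ i, α i) ∈ T := fun i hi => by
      obtain ⟨⟨j, a⟩, hx, rfl⟩ := mem_image.1 (himage ▸ hi)
      exact ⟨a, hx⟩
    refine ⟨fun i hi => (hex i hi).choose, mem_pi.2 fun _ _ => mem_univ _, ?_⟩
    ext ⟨i, a⟩
    simp only [mem_image, mem_attach, true_and, Subtype.exists]
    constructor
    · rintro ⟨i, hi, h⟩
      exact h ▸ (hex i hi).choose_spec
    · intro h
      have hi : i ∈ B := himage ▸ mem_image_of_mem _ h
      exact ⟨i, hi, hinj (hex i hi).choose_spec h rfl⟩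

theorem indepCount_eq_card [Finite V] (G : SimpleGraph V) (k : ℕ) :
    indepCount G k = Nat.card {F : Finset V // IsIndepSet G (F : Set V) ∧ #F = k} := by
  have : Fintype V := Fintype.ofFinite V
  rw [indepCount, ← Nat.card_coe_set_eq]
  refine Nat.card_congr ((Equiv.subtypeEquiv Fintype.finsetEquivSet fun F => ?_).symm)
  simp [Fintype.finsetEquivSet]

section CoronaCount

variable [DecidableEq V] (G : SimpleGraph V)

open scoped Classical in
noncomputable def coronaPairs (E R : Finset V) (j : ℕ) : Finset (Finset V × Finset V) :=
  (E.powerset ×ˢ E.powerset).filter fun x =>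
    x.1 ⊆ R ∧ IsIndepSet G (x.1 : Set V) ∧ Disjoint x.1 x.2 ∧ #x.1 + #x.2 = j

/-- The number of independent sets of size `j` in the clique corona of `G[E]` with cliques of
sizes `p`, whose vertices in `G` lie in `R`: a pair `(A, B)` records the base vertices `A` and
the base vertices `B` whose clique is met, and stands for `∏ v ∈ B, p v` such sets. -/
noncomputable def coronaCount (p : V → ℕ) (E R : Finset V) (j : ℕ) : ℕ :=
  ∑ x ∈ coronaPairs G E R j, ∏ v ∈ x.2, p v

def MixedLogConcave (p : V → ℕ) (E : Finset V) : Prop :=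
  ∀ R₁ R₂ j, coronaCount G p E R₁ (j + 2) * coronaCount G p E R₂ j ≤
    coronaCount G p E R₁ (j + 1) * coronaCount G p E R₂ (j + 1)

variable {G} {p : V → ℕ} {E R : Finset V} {u : V} {j : ℕ}

theorem mem_coronaPairs {x : Finset V × Finset V} :
    x ∈ coronaPairs G E R j ↔ x.1 ⊆ E ∧ x.2 ⊆ E ∧ x.1 ⊆ R ∧ IsIndepSet G (x.1 : Set V) ∧
      Disjoint x.1 x.2 ∧ #x.1 + #x.2 = j := by
  simp only [coronaPairs, mem_filter, mem_product, mem_powerset, and_assoc]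

theorem coronaCount_zero : coronaCount G p E R 0 = 1 := by
  have : coronaPairs G E R 0 = {(∅, ∅)} := by
    ext ⟨A, B⟩
    simp only [mem_coronaPairs, Nat.add_eq_zero_iff, card_eq_zero, mem_singleton, Prod.mk.injEq]
    constructor
    · tauto
    · rintro ⟨rfl, rfl⟩
      simp [IsIndepSet]
  simp [coronaCount, this]

theorem coronaCount_eq_zero (h : #E < j) : coronaCount G p E R j = 0 := by
  refine sum_eq_zero fun x hx => absurd h (not_lt.2 ?_)
  obtain ⟨hA, hB, -, -, hAB, rfl⟩ := mem_coronaPairs.1 hx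
  simpa [card_union_of_disjoint hAB] using card_le_card (union_subset hA hB)

theorem coronaCount_pos (hp : ∀ v ∈ E, 1 ≤ p v) (h : j ≤ #E) : 0 < coronaCount G p E R j := by
  obtain ⟨B, hBE, rfl⟩ := exists_subset_card_eq h
  have hmem : (∅, B) ∈ coronaPairs G E R #B := by
    simp [mem_coronaPairs, hBE, IsIndepSet]
  exact (prod_pos fun v hv => hp v (hBE hv)).trans_le <|
    single_le_sum (f := fun x => ∏ v ∈ x.2, p v) (fun _ _ => Nat.zero_le _) hmem

theorem coronaCount_mono {R' : Finset V} (h : R ⊆ R') :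
    coronaCount G p E R j ≤ coronaCount G p E R' j :=
  sum_le_sum_of_subset fun x hx => by
    obtain ⟨h₁, h₂, h₃, h₄⟩ := mem_coronaPairs.1 hx
    exact mem_coronaPairs.2 ⟨h₁, h₂, h₃.trans h, h₄⟩

theorem coronaCount_congr {p' : V → ℕ} (h : ∀ v ∈ E, p v = p' v) :
    coronaCount G p E R j = coronaCount G p' E R j :=
  sum_congr rfl fun _ hx => prod_congr rfl fun v hv => h v ((mem_coronaPairs.1 hx).2.1 hv)

theorem filter_coronaPairs_notMem :
    (coronaPairs G E R j).filter (fun x => u ∉ x.1 ∧ u ∉ x.2) =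
      coronaPairs G (E.erase u) (R.erase u) j := by
  ext x
  simp only [mem_filter, mem_coronaPairs, subset_erase]
  tauto

theorem coronaCount_erase_le :
    coronaCount G p (E.erase u) (R.erase u) j ≤ coronaCount G p E R j := by
  rw [coronaCount, ← filter_coronaPairs_notMem]
  exact sum_le_sum_of_subset (filter_subset _ _)

theorem sum_coronaCount_erase :
    ∑ u ∈ E, coronaCount G p (E.erase u) (R.erase u) j = (#E - j) * coronaCount G p E R j := by
  simp only [coronaCount, ← filter_coronaPairs_notMem, sum_filter]
  rw [sum_comm, mul_sum]
  refine sum_congr rfl fun x hx => ?_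
  obtain ⟨hA, hB, -, -, hAB, hcard⟩ := mem_coronaPairs.1 hx
  have : E.filter (fun u => u ∉ x.1 ∧ u ∉ x.2) = E \ (x.1 ∪ x.2) := by
    ext; simp
  rw [← sum_filter, sum_const, smul_eq_mul, this,
    card_sdiff_of_subset (union_subset hA hB), card_union_of_disjoint hAB, hcard]

theorem sum_filter_mem_snd_coronaPairs (hu : u ∈ E) :
    ∑ x ∈ (coronaPairs G E R (j + 1)).filter (fun x => u ∈ x.2), ∏ v ∈ x.2.erase u, p v =
      coronaCount G p (E.erase u) (R.erase u) j := by
  refine sum_nbij' (fun x => (x.1, x.2.erase u)) (fun y => (y.1, insert u y.2)) ?_ ?_ ?_ ?_ ?_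
  · rintro ⟨A, B⟩ hx
    simp only [mem_filter, mem_coronaPairs] at hx ⊢
    obtain ⟨⟨hA, hB, hAR, hind, hAB, hcard⟩, huB⟩ := hx
    have huA : u ∉ A := disjoint_right.1 hAB huB
    refine ⟨subset_erase.2 ⟨hA, huA⟩, erase_subset_erase _ hB, subset_erase.2 ⟨hAR, huA⟩, hind,
      disjoint_of_subset_right (erase_subset _ _) hAB, ?_⟩
    rw [card_erase_of_mem huB]
    have := card_pos.2 ⟨u, huB⟩
    omega
  · rintro ⟨A, B⟩ hy
    simp only [mem_filter, mem_coronaPairs, mem_insert_self, and_true] at hy ⊢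
    obtain ⟨hA, hB, hAR, hind, hAB, hcard⟩ := hy
    have huB : u ∉ B := fun h => (mem_erase.1 (hB h)).1 rfl
    refine ⟨(subset_erase.1 hA).1, insert_subset hu ((subset_erase.1 hB).1),
      (subset_erase.1 hAR).1, hind, disjoint_insert_right.2 ⟨(subset_erase.1 hA).2, hAB⟩, ?_⟩
    rw [card_insert_of_notMem huB]
    omega
  · rintro ⟨A, B⟩ hx
    simp only [mem_filter] at hx
    simp [insert_erase hx.2]
  · rintro ⟨A, B⟩ hy
    simp only [mem_coronaPairs] at hy
    simp [erase_insert fun h => (mem_erase.1 (hy.2.1 h)).1 rfl]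
  · intro _ _
    rfl

theorem MixedLogConcave.mul_le_mul_add_three (h : MixedLogConcave G p E)
    (hp : ∀ v ∈ E, 1 ≤ p v) (R₁ R₂ : Finset V) (j : ℕ) :
    coronaCount G p E R₁ (j + 3) * coronaCount G p E R₂ j ≤
      coronaCount G p E R₁ (j + 1) * coronaCount G p E R₂ (j + 2) := by
  rcases lt_or_ge #E (j + 3) with hj | hj
  · simp [coronaCount_eq_zero hj]
  set a := coronaCount G p E R₁
  set b := coronaCount G p E R₂
  have hpos : 0 < a (j + 2) * b (j + 1) :=
    Nat.mul_pos (coronaCount_pos hp (by omega)) (coronaCount_pos hp (by omega))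
  refine Nat.le_of_mul_le_mul_left ?_ hpos
  calc a (j + 2) * b (j + 1) * (a (j + 3) * b j)
      = a (j + 1 + 2) * b (j + 1) * (a (j + 2) * b j) := by ring
    _ ≤ a (j + 1 + 1) * b (j + 1 + 1) * (a (j + 1) * b (j + 1)) :=
      Nat.mul_le_mul (h R₁ R₂ (j + 1)) (h R₁ R₂ j)
    _ = a (j + 2) * b (j + 1) * (a (j + 1) * b (j + 2)) := by ring

variable [DecidableRel G.Adj]

theorem sum_filter_mem_fst_coronaPairs (hu : u ∈ E) (huR : u ∈ R) :
    ∑ x ∈ (coronaPairs G E R (j + 1)).filter (fun x => u ∈ x.1), ∏ v ∈ x.2, p v =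
      coronaCount G p (E.erase u) ((R.erase u).filter fun v => ¬ G.Adj u v) j := by
  refine sum_nbij' (fun x => (x.1.erase u, x.2)) (fun y => (insert u y.1, y.2)) ?_ ?_ ?_ ?_ ?_
  · rintro ⟨A, B⟩ hx
    simp only [mem_filter, mem_coronaPairs] at hx ⊢
    obtain ⟨⟨hA, hB, hAR, hind, hAB, hcard⟩, huA⟩ := hx
    have huB : u ∉ B := disjoint_left.1 hAB huA
    refine ⟨erase_subset_erase _ hA, subset_erase.2 ⟨hB, huB⟩, fun v hv => ?_,
      hind.mono (by simp), disjoint_of_subset_left (erase_subset _ _) hAB, ?_⟩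
    · obtain ⟨hvu, hvA⟩ := mem_erase.1 hv
      exact mem_filter.2 ⟨mem_erase.2 ⟨hvu, hAR hvA⟩, hind huA hvA (Ne.symm hvu)⟩
    · rw [card_erase_of_mem huA]
      have := card_pos.2 ⟨u, huA⟩
      omega
  · rintro ⟨A, B⟩ hy
    simp only [mem_filter, mem_coronaPairs, mem_insert_self, and_true] at hy ⊢
    obtain ⟨hA, hB, hAR, hind, hAB, hcard⟩ := hy
    have huA : u ∉ A := fun h => (mem_erase.1 (hA h)).1 rfl
    refine ⟨insert_subset hu ((subset_erase.1 hA).1), (subset_erase.1 hB).1,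
      insert_subset huR fun v hv => mem_of_mem_erase (mem_filter.1 (hAR hv)).1, ?_,
      disjoint_insert_left.2 ⟨(subset_erase.1 hB).2, hAB⟩, ?_⟩
    · have hnadj : ∀ v ∈ A, ¬ G.Adj u v := fun v hv => (mem_filter.1 (hAR hv)).2
      rw [IsIndepSet, coe_insert, Set.pairwise_insert]
      exact ⟨hind, fun v hv _ => ⟨hnadj v hv, fun h => hnadj v hv h.symm⟩⟩
    · rw [card_insert_of_notMem huA]
      omega
  · rintro ⟨A, B⟩ hx
    simp only [mem_filter] at hx
    simp [insert_erase hx.2]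
  · rintro ⟨A, B⟩ hy
    simp only [mem_coronaPairs] at hy
    simp [erase_insert fun h => (mem_erase.1 (hy.1 h)).1 rfl]
  · intro _ _
    rfl

theorem coronaCount_succ (hu : u ∈ E) :
    coronaCount G p E R (j + 1) = coronaCount G p (E.erase u) (R.erase u) (j + 1) +
      p u * coronaCount G p (E.erase u) (R.erase u) j +
      if u ∈ R then coronaCount G p (E.erase u) ((R.erase u).filter fun v => ¬ G.Adj u v) j
      else 0 := by
  have hsnd : ∑ x ∈ (coronaPairs G E R (j + 1)).filter (fun x => u ∈ x.2), ∏ v ∈ x.2, p v =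
      p u * coronaCount G p (E.erase u) (R.erase u) j := by
    rw [← sum_filter_mem_snd_coronaPairs hu, mul_sum]
    exact sum_congr rfl fun x hx => (mul_prod_erase _ _ (mem_filter.1 hx).2).symm
  have hfst : ∑ x ∈ (coronaPairs G E R (j + 1)).filter (fun x => u ∈ x.1), ∏ v ∈ x.2, p v =
      if u ∈ R then coronaCount G p (E.erase u) ((R.erase u).filter fun v => ¬ G.Adj u v) j
      else 0 := by
    split_ifs with huR
    · exact sum_filter_mem_fst_coronaPairs hu huR
    · refine sum_eq_zero fun x hx => absurd ?_ huR
      obtain ⟨hx, huA⟩ := mem_filter.1 hx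
      exact (mem_coronaPairs.1 hx).2.2.1 huA
  rw [← hsnd, ← hfst, coronaCount, coronaCount, ← filter_coronaPairs_notMem, sum_filter,
    sum_filter, sum_filter, ← sum_add_distrib, ← sum_add_distrib]
  refine sum_congr rfl fun x hx => ?_
  have : u ∈ x.1 → u ∉ x.2 := fun h => disjoint_left.1 (mem_coronaPairs.1 hx).2.2.2.2.1 h
  split_ifs <;> simp_all

theorem coronaCount_update {m : ℕ} (hu : u ∈ E) (hpu : p u = m + 1) :
    coronaCount G p E R (j + 1) = coronaCount G (Function.update p u m) E R (j + 1) +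
      coronaCount G (Function.update p u m) (E.erase u) (R.erase u) j := by
  have hcongr : ∀ R' i, coronaCount G p (E.erase u) R' i =
      coronaCount G (Function.update p u m) (E.erase u) R' i := fun _ _ =>
    coronaCount_congr fun v hv => (Function.update_of_ne (ne_of_mem_erase hv) _ _).symm
  rw [coronaCount_succ hu, coronaCount_succ hu, hcongr, hcongr, hcongr, Function.update_self, hpu]
  ring

theorem succ_mul_coronaCount_succ (hj : j + 1 ≤ #E) :
    (j + 1) * coronaCount G p E R (j + 1) = ∑ u ∈ E,
      (p u * coronaCount G p (E.erase u) (R.erase u) j +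
        if u ∈ R then coronaCount G p (E.erase u) ((R.erase u).filter fun v => ¬ G.Adj u v) j
        else 0) := by
  obtain ⟨d, hd⟩ : ∃ d, #E = d + (j + 1) := ⟨#E - (j + 1), by omega⟩
  have key : #E * coronaCount G p E R (j + 1) = (#E - (j + 1)) * coronaCount G p E R (j + 1) +
      ∑ u ∈ E, (p u * coronaCount G p (E.erase u) (R.erase u) j +
        if u ∈ R then coronaCount G p (E.erase u) ((R.erase u).filter fun v => ¬ G.Adj u v) j
        else 0) := by
    rw [← sum_coronaCount_erase, ← sum_add_distrib, ← smul_eq_mul, ← sum_const]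
    exact sum_congr rfl fun u hu => by rw [coronaCount_succ hu, add_assoc]
  rw [hd, Nat.add_sub_cancel, add_mul] at key
  exact Nat.add_left_cancel key

theorem le_succ_mul_coronaCount_succ {q : ℕ} (hq : ∀ v ∈ E, q ≤ p v) :
    q * ((#E - j) * coronaCount G p E R j) ≤ (j + 1) * coronaCount G p E R (j + 1) := by
  rcases lt_or_ge #E (j + 1) with h | h
  · simp [show #E - j = 0 by omega]
  rw [succ_mul_coronaCount_succ h, ← sum_coronaCount_erase, mul_sum]
  exact sum_le_sum fun u hu => le_add_right (Nat.mul_le_mul_right _ (hq u hu))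

theorem succ_mul_coronaCount_succ_le {Q : ℕ} (hQ : ∀ v ∈ E, p v ≤ Q) :
    (j + 1) * coronaCount G p E R (j + 1) ≤ (Q + 1) * ((#E - j) * coronaCount G p E R j) := by
  rcases lt_or_ge #E (j + 1) with h | h
  · simp [coronaCount_eq_zero h]
  rw [succ_mul_coronaCount_succ h, ← sum_coronaCount_erase, mul_sum]
  refine sum_le_sum fun u hu => ?_
  rw [add_one_mul]
  gcongr
  · exact hQ u hu
  · split_ifs
    · exact coronaCount_mono (filter_subset _ _)
    · exact Nat.zero_le _

theorem mixedLogConcave_of_forall_eq {q : ℕ} (hp : ∀ v ∈ E, p v = q)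
    (hE : #E ^ 2 ≤ 4 * q * (#E + 1)) : MixedLogConcave G p E := by
  intro R₁ R₂ j
  rcases lt_or_ge #E (j + 2) with h | h
  · simp [coronaCount_eq_zero h]
  obtain ⟨b, hb⟩ : ∃ b, #E = (j + 1) + (b + 1) := ⟨#E - (j + 2), by omega⟩
  have hup := succ_mul_coronaCount_succ_le (G := G) (R := R₁) (j := j + 1) fun v hv => (hp v hv).le
  have hlow := le_succ_mul_coronaCount_succ (G := G) (R := R₂) (j := j) fun v hv => (hp v hv).ge
  rw [hb, show j + 1 + (b + 1) - (j + 1) = b + 1 by omega] at hup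
  rw [hb, show j + 1 + (b + 1) - j = b + 2 by omega] at hlow
  rw [hb] at hE
  have hq : 0 < q := Nat.pos_of_ne_zero fun hq => by simp [hq] at hE
  refine Nat.le_of_mul_le_mul_left ?_ (show 0 < q * ((j + 2) * (b + 2)) by positivity)
  calc q * ((j + 2) * (b + 2)) * (coronaCount G p E R₁ (j + 2) * coronaCount G p E R₂ j)
      = (j + 1 + 1) * coronaCount G p E R₁ (j + 1 + 1) *
          (q * ((b + 2) * coronaCount G p E R₂ j)) := by ring
    _ ≤ (q + 1) * ((b + 1) * coronaCount G p E R₁ (j + 1)) *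
          ((j + 1) * coronaCount G p E R₂ (j + 1)) := Nat.mul_le_mul hup hlow
    _ = (q + 1) * ((j + 1) * (b + 1)) *
          (coronaCount G p E R₁ (j + 1) * coronaCount G p E R₂ (j + 1)) := by ring
    _ ≤ q * ((j + 2) * (b + 2)) *
          (coronaCount G p E R₁ (j + 1) * coronaCount G p E R₂ (j + 1)) :=
      Nat.mul_le_mul_right _ (succ_mul_mul_le_of_sq_le hE)

theorem MixedLogConcave.cross_le (hu : u ∈ E) (h : MixedLogConcave G p (E.erase u))
    (hp : ∀ v ∈ E.erase u, 1 ≤ p v) (R₁ R₂ : Finset V) (l : ℕ) :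
    coronaCount G p E R₁ (l + 3) * coronaCount G p (E.erase u) (R₂.erase u) l +
        coronaCount G p (E.erase u) (R₁.erase u) (l + 2) * coronaCount G p E R₂ (l + 1) ≤
      coronaCount G p E R₁ (l + 2) * coronaCount G p (E.erase u) (R₂.erase u) (l + 1) +
        coronaCount G p (E.erase u) (R₁.erase u) (l + 1) * coronaCount G p E R₂ (l + 2) := by
  have hshift := h.mul_le_mul_add_three hp (R₁.erase u) (R₂.erase u) l
  have hbase := Nat.mul_le_mul_left (p u) (h (R₁.erase u) (R₂.erase u) l)
  have hlink₁ := h ((R₁.erase u).filter fun v => ¬ G.Adj u v) (R₂.erase u) l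
  have hlink₂ := h (R₁.erase u) ((R₂.erase u).filter fun v => ¬ G.Adj u v) l
  -- after expanding the four terms over `E` at `u`, the inequality holds term by term
  simp only [coronaCount_succ hu]
  split_ifs <;> nlinarith

theorem MixedLogConcave.of_update {m : ℕ} (hu : u ∈ E) (hpu : p u = m + 1)
    (hp : ∀ v ∈ E.erase u, 1 ≤ p v) (hE : MixedLogConcave G (Function.update p u m) E)
    (hEu : MixedLogConcave G (Function.update p u m) (E.erase u)) : MixedLogConcave G p E := by
  have hp' : ∀ v ∈ E.erase u, 1 ≤ Function.update p u m v := fun v hv => by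
    rw [Function.update_of_ne (ne_of_mem_erase hv)]
    exact hp v hv
  have hupd := fun R i => coronaCount_update (G := G) (R := R) (j := i) hu hpu
  intro R₁ R₂ j
  cases j with
  | zero =>
    have h₁ := hE R₁ R₂ 0
    have h₂ : coronaCount G (Function.update p u m) (E.erase u) (R₁.erase u) 1 ≤
        coronaCount G (Function.update p u m) E R₁ 1 := coronaCount_erase_le
    have e₁ := hupd R₁ 1
    have e₂ := hupd R₁ 0
    have e₃ := hupd R₂ 0
    simp only [zero_add, Nat.reduceAdd, coronaCount_zero, mul_one] at h₁ e₁ e₂ e₃ ⊢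
    rw [e₁, e₂, e₃]
    nlinarith
  | succ l =>
    have h₁ := hE R₁ R₂ (l + 1)
    have h₂ := hEu (R₁.erase u) (R₂.erase u) l
    have h₃ := hEu.cross_le hu hp' R₁ R₂ l
    rw [hupd R₁ (l + 2), hupd R₂ l, hupd R₁ (l + 1), hupd R₂ (l + 1)]
    nlinarith

theorem mixedLogConcave_of_sq_le {q : ℕ} (hq : ∀ v ∈ E, q ≤ p v)
    (hE : #E ^ 2 ≤ 4 * q * (#E + 1)) : MixedLogConcave G p E := by
  induction hs : ∑ v ∈ E, p v using Nat.strong_induction_on generalizing p E with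
  | _ t ih =>
  by_cases hconst : ∀ v ∈ E, p v = q
  · exact mixedLogConcave_of_forall_eq hconst hE
  push Not at hconst
  obtain ⟨u, hu, hpu⟩ := hconst
  obtain ⟨m, hm⟩ : ∃ m, p u = m + 1 := ⟨p u - 1, by have := hq u hu; omega⟩
  have hq₁ : 1 ≤ q := Nat.pos_of_ne_zero fun h => by
    simp [h, card_ne_zero_of_mem hu] at hE
  have hq' : ∀ v ∈ E, q ≤ Function.update p u m v := fun v hv => by
    by_cases hvu : v = u
    · subst hvu
      have := hq v hv
      rw [Function.update_self]
      omega
    · simpa [Function.update_of_ne hvu] using hq v hv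
  have hsum : ∑ v ∈ E, Function.update p u m v + 1 = t := by
    rw [← hs, sum_update_of_mem hu, sdiff_singleton_eq_erase, ← add_sum_erase _ _ hu, hm]
    ring
  have hcard : #E = #(E.erase u) + 1 := (card_erase_add_one hu).symm
  refine .of_update hu hm (fun v hv => hq₁.trans (hq v (mem_of_mem_erase hv)))
    (ih _ (by omega) hq' hE rfl)
    (ih _ ?_ (fun v hv => hq' v (mem_of_mem_erase hv))
      (sq_le_of_succ_sq_le (by rwa [hcard] at hE)) rfl)
  have := sum_le_sum_of_subset (f := Function.update p u m) (erase_subset u E)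
  omega

end CoronaCount

section CliqueCorona

variable (G : SimpleGraph V) (p : V → ℕ)

@[simp]
theorem cliqueCorona_adj_inl_inl {u v : V} :
    (cliqueCorona G p).Adj (.inl u) (.inl v) ↔ G.Adj u v := by
  simp only [cliqueCorona, SimpleGraph.fromRel_adj, ne_eq, Sum.inl.injEq]
  exact ⟨fun ⟨_, h⟩ => h.elim id fun h => h.symm, fun h => ⟨h.ne, .inl h⟩⟩

@[simp]
theorem cliqueCorona_adj_inl_inr {u : V} {x : Σ v, Fin (p v)} :
    (cliqueCorona G p).Adj (.inl u) (.inr x) ↔ u = x.1 := by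
  obtain ⟨v, i⟩ := x
  simp [cliqueCorona]

@[simp]
theorem cliqueCorona_adj_inr_inr {x y : Σ v, Fin (p v)} :
    (cliqueCorona G p).Adj (.inr x) (.inr y) ↔ x.1 = y.1 ∧ x ≠ y := by
  obtain ⟨u, i⟩ := x
  obtain ⟨v, j⟩ := y
  simp only [cliqueCorona, SimpleGraph.fromRel_adj, ne_eq, Sum.inr.injEq]
  exact ⟨fun ⟨h, h'⟩ => ⟨h'.elim id Eq.symm, h⟩, fun ⟨h, h'⟩ => ⟨h', .inl h⟩⟩

variable [DecidableEq V]

theorem isIndepSet_cliqueCorona_iff {F : Finset (V ⊕ Σ v, Fin (p v))} :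
    IsIndepSet (cliqueCorona G p) (F : Set _) ↔ IsIndepSet G (F.toLeft : Set V) ∧
      Set.InjOn Sigma.fst (↑F.toRight : Set (Σ v, Fin (p v))) ∧
      Disjoint F.toLeft (F.toRight.image Sigma.fst) := by
  constructor
  · intro h
    refine ⟨fun u hu v hv huv => ?_, fun x hx y hy hxy => ?_, disjoint_left.2 fun u hu hu' => ?_⟩
    · simpa using h (mem_toLeft.1 hu) (mem_toLeft.1 hv) (by simpa using huv)
    · by_contra hne
      exact h (mem_toRight.1 hx) (mem_toRight.1 hy) (by simpa using hne) (by simp [hxy, hne])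
    · obtain ⟨x, hx, rfl⟩ := mem_image.1 hu'
      exact h (mem_toLeft.1 hu) (mem_toRight.1 hx) Sum.inl_ne_inr (by simp)
  · rintro ⟨hA, hinj, hdisj⟩ (u | x) hu (v | y) hv hne hadj
    · exact hA (mem_toLeft.2 hu) (mem_toLeft.2 hv) (by simpa using hne) (by simpa using hadj)
    · exact disjoint_left.1 hdisj (mem_toLeft.2 hu)
        (mem_image.2 ⟨y, mem_toRight.2 hv, ((cliqueCorona_adj_inl_inr G p).1 hadj).symm⟩)
    · exact disjoint_left.1 hdisj (mem_toLeft.2 hv)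
        (mem_image.2 ⟨x, mem_toRight.2 hu, ((cliqueCorona_adj_inl_inr G p).1 hadj.symm).symm⟩)
    · rw [cliqueCorona_adj_inr_inr] at hadj
      exact hadj.2 (hinj (mem_toRight.2 hu) (mem_toRight.2 hv) hadj.1)

theorem indepCount_cliqueCorona [Fintype V] (k : ℕ) :
    indepCount (cliqueCorona G p) k = coronaCount G p univ univ k := by
  classical
  rw [indepCount_eq_card, Nat.card_eq_fintype_card, Fintype.card_subtype,
    card_eq_sum_card_fiberwise (f := fun F => (F.toLeft, F.toRight.image Sigma.fst))
      (t := coronaPairs G univ univ k) ?_, coronaCount]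
  · refine sum_congr rfl fun x hx => ?_
    obtain ⟨-, -, -, hA, hAB, hcard⟩ := mem_coronaPairs.1 hx
    rw [show ∏ v ∈ x.2, p v = ∏ v ∈ x.2, Fintype.card (Fin (p v)) by simp,
      ← card_filter_injOn_fst_image_eq x.2]
    refine card_nbij' (fun F => F.toRight) (fun T => x.1.disjSum T) ?_ ?_ ?_ ?_
    · intro F hF
      simp only [mem_coe, mem_filter, mem_univ, true_and, Prod.ext_iff] at hF ⊢
      obtain ⟨⟨hind, -⟩, -, himage⟩ := hF
      refine ⟨mem_powerset.2 fun y hy => mem_sigma.2 ⟨himage ▸ mem_image_of_mem _ hy, mem_univ _⟩,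
        ((isIndepSet_cliqueCorona_iff G p).1 hind).2.1, himage⟩
    · intro T hT
      simp only [mem_coe, mem_filter, mem_univ, true_and, Prod.ext_iff] at hT ⊢
      obtain ⟨-, hinj, himage⟩ := hT
      refine ⟨⟨(isIndepSet_cliqueCorona_iff G p).2 ?_, ?_⟩, toLeft_disjSum, by simp [himage]⟩
      · simpa [himage] using ⟨hA, hinj, hAB⟩
      · rw [card_disjSum, ← card_image_of_injOn hinj, himage, hcard]
    · intro F hF
      simp only [mem_coe, mem_filter, mem_univ, true_and, Prod.ext_iff] at hF
      simp [← hF.2.1, toLeft_disjSum_toRight]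
    · intro T _
      exact toRight_disjSum
  · intro F hF
    obtain ⟨hind, hcard⟩ := (mem_filter.1 hF).2
    obtain ⟨hA, hinj, hAB⟩ := (isIndepSet_cliqueCorona_iff G p).1 hind
    refine mem_coronaPairs.2 ⟨subset_univ _, subset_univ _, subset_univ _, hA, hAB, ?_⟩
    rw [card_image_of_injOn hinj, card_toLeft_add_card_toRight, hcard]

end CliqueCorona

theorem corona_family_logConcave_general {V : Type*} [Finite V] (G : SimpleGraph V)
    (p : V → ℕ)
    (h : ((Nat.card V : ℝ)) ^ 2 / (4 * ((Nat.card V : ℝ) + 1)) ≤ ((sInf (Set.range p) : ℕ) : ℝ)) :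
    IndepLogConcave (cliqueCorona G p) := by
  classical
  cases nonempty_fintype V
  have hcard : #(univ : Finset V) ^ 2 ≤ 4 * sInf (Set.range p) * (#(univ : Finset V) + 1) := by
    have h' := (div_le_iff₀ (by positivity)).1 h
    rw [card_univ, ← Nat.card_eq_fintype_card]
    exact_mod_cast (by linarith : (Nat.card V : ℝ) ^ 2 ≤
      4 * (sInf (Set.range p) : ℕ) * ((Nat.card V : ℝ) + 1))
  have hmixed :=
    mixedLogConcave_of_sq_le (G := G) (fun v _ => Nat.sInf_le (Set.mem_range_self v)) hcard
  intro k hk _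
  obtain ⟨j, rfl⟩ : ∃ j, k = j + 1 := ⟨k - 1, by omega⟩
  simpa only [indepCount_cliqueCorona, Nat.add_sub_cancel, sq, mul_comm] using hmixed univ univ j

/-- For a finite graph `G`, a family `𝓗 = {K_{p v} : v ∈ V(G)}` with
`p v ≥ 1`, and `p := min_{v} p v ≥ n(G)²/(4(n(G)+1))`, the independence polynomial
of the clique corona `G∘𝓗` is log-concave. -/
theorem corona_family_logConcave {V : Type*} [Finite V] (G : SimpleGraph V)
    (p : V → ℕ) (hp : ∀ v, 1 ≤ p v)
    (h : ((Nat.card V : ℝ)) ^ 2 / (4 * ((Nat.card V : ℝ) + 1)) ≤ ((sInf (Set.range p) : ℕ) : ℝ)) :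
    IndepLogConcave (cliqueCorona G p) :=
  corona_family_logConcave_general G p h

end WpGraphs
end
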